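/- arXiv:1411.0209 — 3 statements merged into one kernel-verified Lean document; each statement's English description precedes it below -/
import Mathlib

section
/- Let {v_k} be nonnegative random variables with E[v_0] < ∞, and {α_k}, {μ_k} deterministic sequences with 0 ≤ α_k ≤ 1, μ_k ≥ 0, ∑ α_k = ∞, ∑ μ_k < ∞, μ_k/α_k → 0, and E[v_{k+1} | v_0,...,v_k] ≤ (1-α_k)v_k + μ_k almost surely for all k. Then v_k → 0 almost surely. -/
/-!
Write `T k = ∑_{j ≥ k} c j`. For a deterministic sequence `w ≥ 0` with
`w (k+1) ≤ (1 - α k) w k + c k`, the sequence `w k + T k` decreases by at least `α k w k` at each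
step, so it converges to some `L` and `∑ α k w k < ∞`; as `w k → L` and `∑ α k = ∞`, `L = 0`.
This applies to the expectations `E v k`, so `v k → 0` in L¹. In the random setting
`v k + T k` is a supermartingale, bounded in L¹, hence converges almost surely, and so does `v k`.
Its limit is `0`, because an L¹-null sequence has a subsequence tending to `0` almost surely.
-/

open MeasureTheory Filter Topology

theorem summable_of_succ_add_le {s a : ℕ → ℝ} (ha : ∀ k, 0 ≤ a k)
    (hs : BddBelow (Set.range s)) (h : ∀ k, s (k + 1) + a k ≤ s k) : Summable a := by
  obtain ⟨B, hB⟩ := hs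
  have hpartial : ∀ n, ∑ k ∈ Finset.range n, a k ≤ s 0 - s n := by
    intro n
    induction n with
    | zero => simp
    | succ n ih => rw [Finset.sum_range_succ]; linarith [h n]
  exact summable_of_sum_range_le (c := s 0 - B) ha fun n => by linarith [hpartial n, hB ⟨n, rfl⟩]

theorem tsum_nat_add_eq_add_tsum_nat_add {c : ℕ → ℝ} (hc : Summable c) (k : ℕ) :
    ∑' j, c (j + k) = c k + ∑' j, c (j + (k + 1)) := by
  rw [((summable_nat_add_iff k).2 hc).tsum_eq_zero_add, zero_add]
  simp only [add_right_comm _ 1 k, add_assoc]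

theorem tendsto_zero_of_succ_le_one_sub_mul_add {w α c : ℕ → ℝ} (hw : ∀ k, 0 ≤ w k)
    (hα0 : ∀ k, 0 ≤ α k) (hα : ¬ Summable α) (hc : Summable c)
    (hrec : ∀ k, w (k + 1) ≤ (1 - α k) * w k + c k) : Tendsto w atTop (𝓝 0) := by
  set T : ℕ → ℝ := fun k => ∑' j, c (j + k)
  have hT : Tendsto T atTop (𝓝 0) := tendsto_sum_nat_add c
  have hdesc : ∀ k, (w (k + 1) + T (k + 1)) + α k * w k ≤ w k + T k := fun k => by
    linarith [hrec k, tsum_nat_add_eq_add_tsum_nat_add hc k]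
  have hbdd : BddBelow (Set.range fun k => w k + T k) := by
    obtain ⟨B, hB⟩ := hT.bddBelow_range
    exact ⟨B, by rintro _ ⟨k, rfl⟩; linarith [hw k, hB ⟨k, rfl⟩]⟩
  have hanti : Antitone fun k => w k + T k :=
    antitone_nat_of_succ_le fun k => by linarith [hdesc k, mul_nonneg (hα0 k) (hw k)]
  set L := ⨅ k, w k + T k
  have hwL : Tendsto w atTop (𝓝 L) := by
    simpa using (tendsto_atTop_ciInf hanti hbdd).sub hT
  have hsum : Summable fun k => α k * w k :=
    summable_of_succ_add_le (fun k => mul_nonneg (hα0 k) (hw k)) hbdd hdesc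
  obtain hL | hL := (ge_of_tendsto' hwL hw).eq_or_lt
  · rwa [← hL] at hwL
  refine absurd ((hsum.mul_left (2 / L)).of_norm_bounded_eventually ?_) hα
  filter_upwards [Nat.cofinite_eq_atTop ▸ hwL.eventually (lt_mem_nhds (half_lt_self hL))] with k hk
  have hk' : 1 ≤ 2 / L * w k := by rw [div_mul_eq_mul_div, le_div_iff₀ hL]; linarith
  calc ‖α k‖ = α k * 1 := by rw [Real.norm_of_nonneg (hα0 k), mul_one]
    _ ≤ α k * (2 / L * w k) := mul_le_mul_of_nonneg_left hk' (hα0 k)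
    _ = 2 / L * (α k * w k) := by ring

section Stochastic

variable {Ω : Type*} {m : MeasurableSpace Ω} {μ : Measure Ω}

def prefixFiltration {β : Type*} [MeasurableSpace β] (v : ℕ → Ω → β)
    (hv : ∀ k, Measurable (v k)) : Filtration ℕ m where
  seq k := MeasurableSpace.comap (fun ω => (fun i : Fin (k + 1) => v i ω)) inferInstance
  mono' := monotone_nat_of_le_succ fun k => Measurable.comap_le <|
    @measurable_pi_lambda _ _ _ (MeasurableSpace.comap _ inferInstance) _ _ fun i =>
      (measurable_pi_apply i.castSucc).comp (comap_measurable fun ω (j : Fin (k + 2)) => v j ω)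
  le' k := (measurable_pi_lambda _ fun i : Fin (k + 1) => hv i).comap_le

theorem stronglyAdapted_prefixFiltration {v : ℕ → Ω → ℝ} (hv : ∀ k, Measurable (v k)) :
    StronglyAdapted (prefixFiltration v hv) v := fun k =>
  ((measurable_pi_apply (Fin.last k)).comp
    (comap_measurable fun ω (i : Fin (k + 1)) => v i ω)).stronglyMeasurable

theorem integral_le_integral_of_condExp_le {m' : MeasurableSpace Ω} (hm : m' ≤ m)
    [SigmaFinite (μ.trim hm)] {f g : Ω → ℝ} (hg : Integrable g μ) (h : μ[f|m'] ≤ᵐ[μ] g) :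
    ∫ ω, f ω ∂μ ≤ ∫ ω, g ω ∂μ :=
  (integral_condExp hm).symm.trans_le (integral_mono_ae integrable_condExp hg h)

theorem eLpNorm_one_eq_ofReal_integral_norm {E : Type*} [NormedAddCommGroup E] {f : Ω → E}
    (hf : Integrable f μ) : eLpNorm f 1 μ = ENNReal.ofReal (∫ ω, ‖f ω‖ ∂μ) := by
  rw [eLpNorm_one_eq_lintegral_enorm, ofReal_integral_norm_eq_lintegral_enorm hf]

theorem ae_tendsto_zero_of_ae_exists_tendsto {E : Type*} [NormedAddCommGroup E]
    {f : ℕ → Ω → E} (hf : ∀ n, Integrable (f n) μ)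
    (hconv : ∀ᵐ ω ∂μ, ∃ l, Tendsto (fun n => f n ω) atTop (𝓝 l))
    (hL1 : Tendsto (fun n => ∫ ω, ‖f n ω‖ ∂μ) atTop (𝓝 0)) :
    ∀ᵐ ω ∂μ, Tendsto (fun n => f n ω) atTop (𝓝 0) := by
  have hmeas : TendstoInMeasure μ f atTop 0 := by
    refine tendstoInMeasure_of_tendsto_eLpNorm one_ne_zero (fun n => (hf n).aestronglyMeasurable)
      aestronglyMeasurable_zero ?_
    simp_rw [sub_zero, eLpNorm_one_eq_ofReal_integral_norm (hf _)]
    simpa using ENNReal.tendsto_ofReal hL1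
  obtain ⟨ns, hns, hsub⟩ := hmeas.exists_seq_tendsto_ae
  filter_upwards [hconv, hsub] with ω ⟨l, hl⟩ hsubω
  rwa [tendsto_nhds_unique (hl.comp hns.tendsto_atTop) hsubω] at hl

theorem MeasureTheory.Supermartingale.exists_ae_tendsto_of_bdd [IsFiniteMeasure μ]
    {ℱ : Filtration ℕ m} {f : ℕ → Ω → ℝ} {R : NNReal} (hf : Supermartingale f ℱ μ)
    (hbdd : ∀ n, eLpNorm (f n) 1 μ ≤ R) :
    ∀ᵐ ω ∂μ, ∃ c, Tendsto (fun n => f n ω) atTop (𝓝 c) := by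
  filter_upwards [hf.neg.exists_ae_tendsto_of_bdd (R := R) fun n => by simpa using hbdd n]
    with ω ⟨c, hc⟩
  exact ⟨-c, by simpa using hc.neg⟩

variable {ℱ : Filtration ℕ m} {v : ℕ → Ω → ℝ} {α c : ℕ → ℝ}

theorem integral_succ_le_of_condExp_succ_le [IsProbabilityMeasure μ]
    (hint : ∀ k, Integrable (v k) μ)
    (hrec : ∀ k, μ[v (k + 1)|ℱ k] ≤ᵐ[μ] fun ω => (1 - α k) * v k ω + c k) (k : ℕ) :
    ∫ ω, v (k + 1) ω ∂μ ≤ (1 - α k) * ∫ ω, v k ω ∂μ + c k := by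
  have hint' : Integrable (fun ω => (1 - α k) * v k ω + c k) μ :=
    ((hint k).const_mul _).add (integrable_const _)
  refine (integral_le_integral_of_condExp_le (ℱ.le k) hint' (hrec k)).trans_eq ?_
  rw [integral_add ((hint k).const_mul _) (integrable_const _), integral_const_mul,
    integral_const, probReal_univ, one_smul]

theorem supermartingale_add_tsum_nat_add [IsFiniteMeasure μ] (hadp : StronglyAdapted ℱ v)
    (hnonneg : ∀ k, 0 ≤ᵐ[μ] v k) (hint : ∀ k, Integrable (v k) μ) (hα0 : ∀ k, 0 ≤ α k)
    (hc : Summable c)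
    (hrec : ∀ k, μ[v (k + 1)|ℱ k] ≤ᵐ[μ] fun ω => (1 - α k) * v k ω + c k) :
    Supermartingale (fun k ω => v k ω + ∑' j, c (j + k)) ℱ μ := by
  refine supermartingale_nat (fun k => (hadp k).add stronglyMeasurable_const)
    (fun k => (hint k).add (integrable_const _)) fun k => ?_
  set T : ℕ → ℝ := fun k => ∑' j, c (j + k)
  have hadd : μ[fun ω => v (k + 1) ω + T (k + 1)|ℱ k]
      =ᵐ[μ] μ[v (k + 1)|ℱ k] + fun _ => T (k + 1) := by
    rw [← condExp_const (μ := μ) (ℱ.le k) (T (k + 1))]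
    exact condExp_add (hint (k + 1)) (integrable_const _) (ℱ k)
  filter_upwards [hadd, hrec k, hnonneg k] with ω hω hrecω hvω
  rw [hω, Pi.add_apply]
  nlinarith [tsum_nat_add_eq_add_tsum_nat_add hc k, mul_nonneg (hα0 k) hvω]

theorem ae_tendsto_zero_of_condExp_succ_le [IsProbabilityMeasure μ]
    (hadp : StronglyAdapted ℱ v) (hnonneg : ∀ k, 0 ≤ᵐ[μ] v k)
    (hint : ∀ k, Integrable (v k) μ) (hα0 : ∀ k, 0 ≤ α k) (hα : ¬ Summable α) (hc : Summable c)
    (hrec : ∀ k, μ[v (k + 1)|ℱ k] ≤ᵐ[μ] fun ω => (1 - α k) * v k ω + c k) :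
    ∀ᵐ ω ∂μ, Tendsto (fun k => v k ω) atTop (𝓝 0) := by
  set T : ℕ → ℝ := fun k => ∑' j, c (j + k)
  have hT : Tendsto T atTop (𝓝 0) := tendsto_sum_nat_add c
  have hnorm : ∀ k, ∫ ω, ‖v k ω‖ ∂μ = ∫ ω, v k ω ∂μ := fun k =>
    integral_congr_ae <| (hnonneg k).mono fun ω hω => Real.norm_of_nonneg hω
  have hu : Tendsto (fun k => ∫ ω, v k ω ∂μ) atTop (𝓝 0) :=
    tendsto_zero_of_succ_le_one_sub_mul_add (fun k => integral_nonneg_of_ae (hnonneg k)) hα0 hα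
      hc (integral_succ_le_of_condExp_succ_le hint hrec)
  obtain ⟨C, hC⟩ := (hu.add hT.abs).bddAbove_range
  have hbdd : ∀ n, eLpNorm (fun ω => v n ω + T n) 1 μ ≤ C.toNNReal := fun n => by
    rw [eLpNorm_one_eq_ofReal_integral_norm (f := fun ω => v n ω + T n)
      ((hint n).add (integrable_const _))]
    refine ENNReal.ofReal_le_ofReal ?_
    calc ∫ ω, ‖v n ω + T n‖ ∂μ ≤ ∫ ω, (‖v n ω‖ + |T n|) ∂μ :=
          integral_mono ((hint n).add (integrable_const _)).norm
            ((hint n).norm.add (integrable_const _)) fun ω => norm_add_le _ _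
      _ = ∫ ω, v n ω ∂μ + |T n| := by
          rw [integral_add (hint n).norm (integrable_const _), integral_const, hnorm]; simp
      _ ≤ C := hC ⟨n, rfl⟩
  have hconv :=
    (supermartingale_add_tsum_nat_add hadp hnonneg hint hα0 hc hrec).exists_ae_tendsto_of_bdd hbdd
  refine ae_tendsto_zero_of_ae_exists_tendsto hint ?_ (by simpa only [hnorm] using hu)
  filter_upwards [hconv] with ω ⟨l, hl⟩
  exact ⟨l, by simpa only [T, add_sub_cancel_right, sub_zero] using hl.sub hT⟩

end Stochastic

theorem robbins_siegmund_special_general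
    {Ω : Type*} [MeasurableSpace Ω] (μ : Measure Ω) [IsProbabilityMeasure μ]
    (v : ℕ → Ω → ℝ)
    (hmeas : ∀ k, Measurable (v k))
    (hnonneg : ∀ k, 0 ≤ᵐ[μ] v k)
    (hint : ∀ k, Integrable (v k) μ)
    (α c : ℕ → ℝ)
    (hα0 : ∀ k, 0 ≤ α k)
    (hαdiv : ¬ Summable α) (hcsum : Summable c)
    (hrec : ∀ k,
      μ[v (k + 1) |
          MeasurableSpace.comap (fun ω => (fun i : Fin (k + 1) => v i ω)) inferInstance]
        ≤ᵐ[μ] fun ω => (1 - α k) * v k ω + c k) :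
    ∀ᵐ ω ∂μ, Tendsto (fun k => v k ω) atTop (nhds 0) :=
  ae_tendsto_zero_of_condExp_succ_le (ℱ := prefixFiltration v hmeas)
    (stronglyAdapted_prefixFiltration hmeas) hnonneg hint hα0 hαdiv hcsum hrec

/-- Robbins–Siegmund type lemma: nonnegative random variables `v_k` with
`E[v_{k+1} | v_0,…,v_k] ≤ (1-α_k) v_k + μ_k` a.s., where `0 ≤ α_k ≤ 1`, `μ_k ≥ 0`,
`∑ α_k = ∞`, `∑ μ_k < ∞` and `μ_k/α_k → 0`, converge to `0` almost surely. -/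
theorem robbins_siegmund_special
    {Ω : Type*} [MeasurableSpace Ω] (μ : Measure Ω) [IsProbabilityMeasure μ]
    (v : ℕ → Ω → ℝ)
    (hmeas : ∀ k, Measurable (v k))
    (hnonneg : ∀ k, 0 ≤ᵐ[μ] v k)
    (hint : ∀ k, Integrable (v k) μ)
    (α c : ℕ → ℝ)
    (hα0 : ∀ k, 0 ≤ α k) (hα1 : ∀ k, α k ≤ 1) (hc0 : ∀ k, 0 ≤ c k)
    (hαdiv : ¬ Summable α) (hcsum : Summable c)
    (hratio : Tendsto (fun k => c k / α k) atTop (nhds 0))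
    (hrec : ∀ k,
      μ[v (k + 1) |
          MeasurableSpace.comap (fun ω => (fun i : Fin (k + 1) => v i ω)) inferInstance]
        ≤ᵐ[μ] fun ω => (1 - α k) * v k ω + c k) :
    ∀ᵐ ω ∂μ, Tendsto (fun k => v k ω) atTop (nhds 0) :=
  robbins_siegmund_special_general μ v hmeas hnonneg hint α c hα0 hαdiv hcsum hrec
end

section
/- Let X ⊂ ℝⁿ be closed, convex, bounded by M (‖x‖ ≤ M for x ∈ X), F: X' → ℝⁿ monotone on a set X' ⊇ X with ‖F‖ ≤ C on X', and F_k(x) = E[F(x+z_k)], F_{k-1}(x) = E[F(x+z_{k-1})] where z_k, z_{k-1} are uniform on balls B(0,ε_k), B(0,ε_{k-1}) with X + B(0,max ε) ⊆ X'. Let s_k, s_{k-1} be the unique solutions of VI(X, F_k + η_k I) and VI(X, F_{k-1} + η_{k-1} I) with η_k, η_{k-1} > 0. Then η_{k-1}‖s_k - s_{k-1}‖ ≤ ‖F_k(s_k) - F_{k-1}(s_k)‖ + M|η_{k-1} - η_k|. -/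
/-!
Test the variational inequality of `s_k` at `s_{k-1}` and that of `s_{k-1}` at `s_k`, and add
the monotonicity inequality of `F_{k-1}` at the same two points. The regularization terms
leave `η_{k-1} ‖s_k - s_{k-1}‖²` on the left, and Cauchy–Schwarz bounds what remains by
`(‖F_k(s_k) - F_{k-1}(s_k)‖ + M |η_{k-1} - η_k|) ‖s_k - s_{k-1}‖`.
-/

open RealInnerProductSpace

section RegularizedVI

variable {E : Type*} [NormedAddCommGroup E] [InnerProductSpace ℝ E]

theorem regularized_vi_solutions_mul_sq_dist_le {G H : E → E} {η η' : ℝ} {s s' : E}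
    (hs : 0 ≤ ⟪G s + η • s, s' - s⟫) (hs' : 0 ≤ ⟪H s' + η' • s', s - s'⟫)
    (hH : 0 ≤ ⟪s' - s, H s' - H s⟫) :
    η' * ‖s - s'‖ ^ 2 ≤ ⟪G s - H s, s' - s⟫ + (η - η') * ⟪s, s' - s⟫ := by
  have sum_eq : ⟪G s + η • s, s' - s⟫ + ⟪H s' + η' • s', s - s'⟫ + ⟪s' - s, H s' - H s⟫
      = ⟪G s - H s, s' - s⟫ + (η - η') * ⟪s, s' - s⟫ - η' * ‖s - s'‖ ^ 2 := by
    rw [← real_inner_self_eq_norm_sq, real_inner_comm _ (s' - s)]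
    simp only [inner_add_left, inner_sub_left, inner_sub_right, real_inner_smul_left]
    rw [real_inner_comm s s']
    ring
  linarith

theorem regularized_vi_solutions_mul_dist_le {G H : E → E} {η η' M : ℝ} {s s' : E}
    (hs : 0 ≤ ⟪G s + η • s, s' - s⟫) (hs' : 0 ≤ ⟪H s' + η' • s', s - s'⟫)
    (hH : 0 ≤ ⟪s' - s, H s' - H s⟫) (hM : ‖s‖ ≤ M) :
    η' * ‖s - s'‖ ≤ ‖G s - H s‖ + M * |η' - η| := by
  have hd : ‖s' - s‖ = ‖s - s'‖ := norm_sub_rev s' s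
  have bound : ⟪G s - H s, s' - s⟫ + (η - η') * ⟪s, s' - s⟫
      ≤ (‖G s - H s‖ + M * |η' - η|) * ‖s - s'‖ := by
    have h₁ : ⟪G s - H s, s' - s⟫ ≤ ‖G s - H s‖ * ‖s - s'‖ := hd ▸ real_inner_le_norm _ _
    have h₂ : (η - η') * ⟪s, s' - s⟫ ≤ |η' - η| * (M * ‖s - s'‖) :=
      calc (η - η') * ⟪s, s' - s⟫ ≤ |η' - η| * |⟪s, s' - s⟫| := by
            rw [abs_sub_comm, ← abs_mul]; exact le_abs_self _
        _ ≤ |η' - η| * (M * ‖s - s'‖) := by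
            gcongr
            exact hd ▸ (abs_real_inner_le_norm _ _).trans (by gcongr)
    linarith
  have key := (regularized_vi_solutions_mul_sq_dist_le hs hs' hH).trans bound
  have hM₀ : 0 ≤ M := (norm_nonneg s).trans hM
  rcases (norm_nonneg (s - s')).eq_or_lt with hd₀ | hd₀
  · rw [← hd₀, mul_zero]
    positivity
  · exact le_of_mul_le_mul_right (by linarith) hd₀

end RegularizedVI

theorem tikhonov_trajectory_consecutive_bound_general
    {n : ℕ} (X : Set (EuclideanSpace ℝ (Fin n)))
    (M : ℝ) (hM : ∀ x ∈ X, ‖x‖ ≤ M)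
    (Fk Fk1 : EuclideanSpace ℝ (Fin n) → EuclideanSpace ℝ (Fin n))
    (hmonok1 : ∀ x ∈ X, ∀ y ∈ X, 0 ≤ (inner ℝ (x - y) (Fk1 x - Fk1 y) : ℝ))
    (ηk ηk1 : ℝ)
    (sk sk1 : EuclideanSpace ℝ (Fin n)) (hsk : sk ∈ X) (hsk1 : sk1 ∈ X)
    (hVIk : ∀ x ∈ X, 0 ≤ (inner ℝ (Fk sk + ηk • sk) (x - sk) : ℝ))
    (hVIk1 : ∀ x ∈ X, 0 ≤ (inner ℝ (Fk1 sk1 + ηk1 • sk1) (x - sk1) : ℝ)) :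
    ηk1 * ‖sk - sk1‖ ≤ ‖Fk sk - Fk1 sk‖ + M * |ηk1 - ηk| :=
  regularized_vi_solutions_mul_dist_le (hVIk sk1 hsk1) (hVIk1 sk hsk)
    (hmonok1 sk1 hsk1 sk hsk) (hM sk hsk)

/-- Bound on the distance between consecutive points of the regularized smoothed
Tikhonov trajectory: if `s_k` solves VI(X, F_k + η_k I) and `s_{k-1}` solves
VI(X, F_{k-1} + η_{k-1} I), where `F_k, F_{k-1}` are monotone on the set `X` bounded
by `M`, then `η_{k-1} ‖s_k - s_{k-1}‖ ≤ ‖F_k(s_k) - F_{k-1}(s_k)‖ + M |η_{k-1} - η_k|`. -/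
theorem tikhonov_trajectory_consecutive_bound
    {n : ℕ} (X : Set (EuclideanSpace ℝ (Fin n)))
    (hXc : IsClosed X) (hXconv : Convex ℝ X)
    (M : ℝ) (hM : ∀ x ∈ X, ‖x‖ ≤ M)
    (Fk Fk1 : EuclideanSpace ℝ (Fin n) → EuclideanSpace ℝ (Fin n))
    (hmonok : ∀ x ∈ X, ∀ y ∈ X, 0 ≤ (inner ℝ (x - y) (Fk x - Fk y) : ℝ))
    (hmonok1 : ∀ x ∈ X, ∀ y ∈ X, 0 ≤ (inner ℝ (x - y) (Fk1 x - Fk1 y) : ℝ))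
    (ηk ηk1 : ℝ) (hηk : 0 < ηk) (hηk1 : 0 < ηk1)
    (sk sk1 : EuclideanSpace ℝ (Fin n)) (hsk : sk ∈ X) (hsk1 : sk1 ∈ X)
    (hVIk : ∀ x ∈ X, 0 ≤ (inner ℝ (Fk sk + ηk • sk) (x - sk) : ℝ))
    (hVIk1 : ∀ x ∈ X, 0 ≤ (inner ℝ (Fk1 sk1 + ηk1 • sk1) (x - sk1) : ℝ)) :
    ηk1 * ‖sk - sk1‖ ≤ ‖Fk sk - Fk1 sk‖ + M * |ηk1 - ηk| :=
  tikhonov_trajectory_consecutive_bound_general X M hM Fk Fk1 hmonok1 ηk ηk1 sk sk1 hsk hsk1 hVIk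
    hVIk1
end

section
/- Under the setup of the smoothed Tikhonov trajectory: let F be monotone and bounded by C on X^ε, F_k(x) = E[F(x+z_k)] with z_k uniform on B(0,ε_k), and s_k the unique solution of VI(X, F_k + η_k I). If ε_k ≤ ε_{k-1}, then ‖F_k(s_k) - F_{k-1}(s_k)‖ ≤ 2C(1 - (ε_k/ε_{k-1})ⁿ). -/
/-!
Split the integral over the larger ball `s` as the integral over the smaller ball `t` plus the
integral over the annulus `s \ t`. Then
`⨍_t f - ⨍_s f = (|t|⁻¹ - |s|⁻¹) ∫_t f - |s|⁻¹ ∫_{s \ t} f`, and bounding `‖f‖ ≤ C` makes each term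
at most `C (1 - |t| / |s|)`. For balls of radii `r ≤ R` in dimension `n`, scaling gives
`|t| / |s| = (r / R)ⁿ`.
-/

open MeasureTheory Metric Module

theorem norm_setAverage_sub_setAverage_le_of_subset {α E : Type*} [MeasurableSpace α]
    {μ : Measure α} [NormedAddCommGroup E] [NormedSpace ℝ E] {f : α → E} {s t : Set α} {C : ℝ}
    (hts : t ⊆ s) (ht : MeasurableSet t) (hs : μ s ≠ ⊤) (ht₀ : μ t ≠ 0)
    (hf : IntegrableOn f s μ) (hfC : ∀ x ∈ s, ‖f x‖ ≤ C) :
    ‖⨍ x in t, f x ∂μ - ⨍ x in s, f x ∂μ‖ ≤ 2 * C * (1 - μ.real t / μ.real s) := by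
  have ht_pos : 0 < μ.real t :=
    ENNReal.toReal_pos ht₀ (measure_ne_top_of_subset hts hs)
  have hts_real : μ.real t ≤ μ.real s := measureReal_mono hts hs
  have hs_pos : 0 < μ.real s := ht_pos.trans_le hts_real
  have hIt : ‖∫ x in t, f x ∂μ‖ ≤ C * μ.real t :=
    norm_setIntegral_le_of_norm_le_const (measure_ne_top_of_subset hts hs).lt_top
      fun x hx => hfC x (hts hx)
  have hIsdiff : ‖∫ x in s, f x ∂μ - ∫ x in t, f x ∂μ‖ ≤ C * (μ.real s - μ.real t) := by
    rw [← setIntegral_sdiff ht hf hts, ← measureReal_sdiff hts ht hs]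
    exact norm_setIntegral_le_of_norm_le_const
      (measure_ne_top_of_subset Set.sdiff_subset hs).lt_top fun x hx => hfC x hx.1
  have hcoef : 0 ≤ (μ.real t)⁻¹ - (μ.real s)⁻¹ :=
    sub_nonneg.2 (inv_anti₀ ht_pos hts_real)
  set It := ∫ x in t, f x ∂μ
  set Is := ∫ x in s, f x ∂μ
  rw [setAverage_eq, setAverage_eq]
  calc ‖(μ.real t)⁻¹ • It - (μ.real s)⁻¹ • Is‖
      = ‖((μ.real t)⁻¹ - (μ.real s)⁻¹) • It - (μ.real s)⁻¹ • (Is - It)‖ := by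
        rw [sub_smul, smul_sub]; abel_nf
    _ ≤ ((μ.real t)⁻¹ - (μ.real s)⁻¹) * ‖It‖ + (μ.real s)⁻¹ * ‖Is - It‖ := by
        refine (norm_sub_le _ _).trans_eq ?_
        rw [norm_smul, norm_smul, Real.norm_of_nonneg hcoef,
          Real.norm_of_nonneg (inv_nonneg.2 hs_pos.le)]
    _ ≤ ((μ.real t)⁻¹ - (μ.real s)⁻¹) * (C * μ.real t)
          + (μ.real s)⁻¹ * (C * (μ.real s - μ.real t)) := by gcongr
    _ = 2 * C * (1 - μ.real t / μ.real s) := by field_simp; ring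

theorem measureReal_ball_div_measureReal_ball {E : Type*} [NormedAddCommGroup E]
    [NormedSpace ℝ E] [MeasurableSpace E] [BorelSpace E] [FiniteDimensional ℝ E] [Nontrivial E]
    (μ : Measure E) [μ.IsAddHaarMeasure] (x : E) {r R : ℝ} (hr : 0 ≤ r) (hR : 0 < R) :
    μ.real (ball x r) / μ.real (ball x R) = (r / R) ^ finrank ℝ E := by
  have hunit : (μ (ball (0 : E) 1)).toReal ≠ 0 :=
    ENNReal.toReal_ne_zero.2 ⟨(measure_ball_pos μ 0 one_pos).ne', measure_ball_lt_top.ne⟩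
  simp only [Measure.real, Measure.addHaar_ball μ x hr, Measure.addHaar_ball μ x hR.le,
    ENNReal.toReal_mul, ENNReal.toReal_ofReal (pow_nonneg hr _),
    ENNReal.toReal_ofReal (pow_nonneg hR.le _)]
  rw [div_pow, mul_div_mul_right _ _ hunit]

theorem smoothed_maps_difference_bound_general
    {n : ℕ} (hn : 0 < n)
    (X : Set (EuclideanSpace ℝ (Fin n)))
    (F : EuclideanSpace ℝ (Fin n) → EuclideanSpace ℝ (Fin n))
    (C ε εk εk1 : ℝ)
    (hεk : 0 < εk) (hle : εk ≤ εk1) (hε : εk1 ≤ ε)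
    (hFb : ∀ x ∈ X, ∀ z : EuclideanSpace ℝ (Fin n), ‖z‖ ≤ ε → ‖F (x + z)‖ ≤ C)
    (s : EuclideanSpace ℝ (Fin n)) (hs : s ∈ X)
    (hint : IntegrableOn (fun z => F (s + z)) (Metric.ball (0 : EuclideanSpace ℝ (Fin n)) εk1)) :
    ‖(volume (Metric.ball (0 : EuclideanSpace ℝ (Fin n)) εk)).toReal⁻¹
          • (∫ z in Metric.ball (0 : EuclideanSpace ℝ (Fin n)) εk, F (s + z))
        - (volume (Metric.ball (0 : EuclideanSpace ℝ (Fin n)) εk1)).toReal⁻¹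
          • (∫ z in Metric.ball (0 : EuclideanSpace ℝ (Fin n)) εk1, F (s + z))‖
      ≤ 2 * C * (1 - (εk / εk1) ^ n) := by
  have : Nontrivial (EuclideanSpace ℝ (Fin n)) :=
    nontrivial_of_finrank_pos (R := ℝ) (by rwa [finrank_euclideanSpace_fin])
  have hbound : ∀ z ∈ ball (0 : EuclideanSpace ℝ (Fin n)) εk1, ‖F (s + z)‖ ≤ C :=
    fun z hz => hFb s hs z ((mem_ball_zero_iff.1 hz).le.trans hε)
  have hratio := measureReal_ball_div_measureReal_ball volume (0 : EuclideanSpace ℝ (Fin n))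
    hεk.le (hεk.trans_le hle)
  rw [finrank_euclideanSpace_fin] at hratio
  have hcompare := norm_setAverage_sub_setAverage_le_of_subset (ball_subset_ball hle)
    measurableSet_ball measure_ball_lt_top.ne (measure_ball_pos volume 0 hεk).ne' hint hbound
  rwa [setAverage_eq, setAverage_eq, hratio] at hcompare

/-- Difference of consecutive smoothed maps: if `‖F‖ ≤ C` on the `ε`-enlargement of
`X`, and `F_j(x) = E[F(x + z_j)]` with `z_j` uniform on the ball `B(0, ε_j)`, then for
`0 < ε_k ≤ ε_{k-1} ≤ ε` and any `s ∈ X`,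
`‖F_k(s) - F_{k-1}(s)‖ ≤ 2C (1 - (ε_k/ε_{k-1})ⁿ)`. -/
theorem smoothed_maps_difference_bound
    {n : ℕ} (hn : 0 < n)
    (X : Set (EuclideanSpace ℝ (Fin n)))
    (F : EuclideanSpace ℝ (Fin n) → EuclideanSpace ℝ (Fin n))
    (C ε εk εk1 : ℝ) (hC : 0 < C)
    (hεk : 0 < εk) (hle : εk ≤ εk1) (hε : εk1 ≤ ε)
    (hFb : ∀ x ∈ X, ∀ z : EuclideanSpace ℝ (Fin n), ‖z‖ ≤ ε → ‖F (x + z)‖ ≤ C)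
    (s : EuclideanSpace ℝ (Fin n)) (hs : s ∈ X)
    (hint : IntegrableOn (fun z => F (s + z)) (Metric.ball (0 : EuclideanSpace ℝ (Fin n)) εk1)) :
    ‖(volume (Metric.ball (0 : EuclideanSpace ℝ (Fin n)) εk)).toReal⁻¹
          • (∫ z in Metric.ball (0 : EuclideanSpace ℝ (Fin n)) εk, F (s + z))
        - (volume (Metric.ball (0 : EuclideanSpace ℝ (Fin n)) εk1)).toReal⁻¹
          • (∫ z in Metric.ball (0 : EuclideanSpace ℝ (Fin n)) εk1, F (s + z))‖
      ≤ 2 * C * (1 - (εk / εk1) ^ n) :=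
  smoothed_maps_difference_bound_general hn X F C ε εk εk1 hεk hle hε hFb s hs hint
end
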